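/- arXiv:2409.04682 — 4 statements merged into one kernel-verified Lean document; each statement's English description precedes it below -/
import Mathlib

section
/- Let ν ≥ 1, κ ≥ 1 be integers, and let j₁, i₁, j₂, i₂, m_x, k_x, m_z, k_z be integers with |j₁ − i₁| ≤ ν − 1, |j₂ − i₂| ≤ ν − 1, |m_x − k_x| ≤ κ − 1 and |m_z − k_z| ≤ κ − 1. Let d_s > 0, D_k > 0, D_m > 0 and real numbers x_u, z_u, x_k, z_k, and set x_m = x_k + (m_x − k_x)·d_s and z_m = z_k + (m_z − k_z)·d_s. Define the phases β_k = π·[(j₁ − i₁)·(x_u − x_k)/D_k + (j₂ − i₂)·(z_u − z_k)/D_k] and β_m = π·[(j₁ − i₁)·(x_u − x_m)/D_m + (j₂ − i₂)·(z_u − z_m)/D_m]. Then |β_k − β_m|/π ≤ (ν − 1)·[(|x_u − x_k| + |z_u − z_k|)·|1/D_k − 1/D_m| + 2·(κ − 1)·d_s/D_m]. -/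
/-- bound on the normalized phase difference `|β_k - β_m|/π` between
two subarrays of a widely-spaced array. -/
theorem phase_difference_bound (ν κ : ℕ) (hν : 1 ≤ ν) (hκ : 1 ≤ κ)
    (j₁ i₁ j₂ i₂ mx kx mz kz : ℤ)
    (hj₁ : |j₁ - i₁| ≤ (ν : ℤ) - 1) (hj₂ : |j₂ - i₂| ≤ (ν : ℤ) - 1)
    (hmx : |mx - kx| ≤ (κ : ℤ) - 1) (hmz : |mz - kz| ≤ (κ : ℤ) - 1)
    (ds Dk Dm : ℝ) (hds : 0 < ds) (hDk : 0 < Dk) (hDm : 0 < Dm)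
    (xu zu xk zk xm zm : ℝ)
    (hxm : xm = xk + ((mx : ℝ) - (kx : ℝ)) * ds)
    (hzm : zm = zk + ((mz : ℝ) - (kz : ℝ)) * ds)
    (βk βm : ℝ)
    (hβk : βk = Real.pi * (((j₁ : ℝ) - (i₁ : ℝ)) * (xu - xk) / Dk
      + ((j₂ : ℝ) - (i₂ : ℝ)) * (zu - zk) / Dk))
    (hβm : βm = Real.pi * (((j₁ : ℝ) - (i₁ : ℝ)) * (xu - xm) / Dm
      + ((j₂ : ℝ) - (i₂ : ℝ)) * (zu - zm) / Dm)) :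
    |βk - βm| / Real.pi ≤ ((ν : ℝ) - 1) *
      ((|xu - xk| + |zu - zk|) * |1 / Dk - 1 / Dm|
        + 2 * ((κ : ℝ) - 1) * ds / Dm) := by
  set A : ℝ := (j₁ : ℝ) - (i₁ : ℝ) with hA'
  set B : ℝ := (j₂ : ℝ) - (i₂ : ℝ) with hB'
  set P : ℝ := (mx : ℝ) - (kx : ℝ) with hP'
  set Q : ℝ := (mz : ℝ) - (kz : ℝ) with hQ'
  have hA : |A| ≤ (ν : ℝ) - 1 := by
    have h := hj₁
    have h2 : (|j₁ - i₁| : ℝ) ≤ ((ν : ℤ) : ℝ) - 1 := by exact_mod_cast h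
    push_cast at h2
    simpa using h2
  have hB : |B| ≤ (ν : ℝ) - 1 := by
    have h := hj₂
    have h2 : (|j₂ - i₂| : ℝ) ≤ ((ν : ℤ) : ℝ) - 1 := by exact_mod_cast h
    push_cast at h2
    simpa using h2
  have hP : |P| ≤ (κ : ℝ) - 1 := by
    have h := hmx
    have h2 : (|mx - kx| : ℝ) ≤ ((κ : ℤ) : ℝ) - 1 := by exact_mod_cast h
    push_cast at h2
    simpa using h2
  have hQ : |Q| ≤ (κ : ℝ) - 1 := by
    have h := hmz
    have h2 : (|mz - kz| : ℝ) ≤ ((κ : ℤ) : ℝ) - 1 := by exact_mod_cast h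
    push_cast at h2
    simpa using h2
  set Δ : ℝ := 1 / Dk - 1 / Dm with hΔ'
  set T : ℝ := A * (xu - xk) * Δ + A * P * (ds / Dm)
    + B * (zu - zk) * Δ + B * Q * (ds / Dm) with hT'
  have hT : βk - βm = Real.pi * T := by
    rw [hβk, hβm, hT', hxm, hzm, hΔ']
    field_simp
    ring
  have hpi : (0:ℝ) < Real.pi := Real.pi_pos
  have habs : |βk - βm| / Real.pi = |T| := by
    rw [hT, abs_mul, abs_of_pos hpi, mul_div_cancel_left₀ _ (ne_of_gt hpi)]
  rw [habs]
  have htri : |T| ≤ |A * (xu - xk) * Δ| + |A * P * (ds / Dm)|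
      + |B * (zu - zk) * Δ| + |B * Q * (ds / Dm)| := by
    rw [hT']
    calc |A * (xu - xk) * Δ + A * P * (ds / Dm) + B * (zu - zk) * Δ + B * Q * (ds / Dm)|
        ≤ |A * (xu - xk) * Δ + A * P * (ds / Dm) + B * (zu - zk) * Δ| + |B * Q * (ds / Dm)| :=
          abs_add_le _ _
      _ ≤ |A * (xu - xk) * Δ + A * P * (ds / Dm)| + |B * (zu - zk) * Δ| + |B * Q * (ds / Dm)| := by
          gcongr; exact abs_add_le _ _
      _ ≤ |A * (xu - xk) * Δ| + |A * P * (ds / Dm)| + |B * (zu - zk) * Δ| + |B * Q * (ds / Dm)| := by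
          gcongr; exact abs_add_le _ _
  have hds' : (0:ℝ) ≤ ds / Dm := le_of_lt (div_pos hds hDm)
  have hν1 : (0:ℝ) ≤ (ν : ℝ) - 1 := le_trans (abs_nonneg A) hA
  have hκ1 : (0:ℝ) ≤ (κ : ℝ) - 1 := le_trans (abs_nonneg P) hP
  have h1 : |A * (xu - xk) * Δ| ≤ ((ν:ℝ) - 1) * (|xu - xk| * |Δ|) := by
    rw [abs_mul, abs_mul, mul_assoc]
    exact mul_le_mul_of_nonneg_right hA (by positivity)
  have h3 : |B * (zu - zk) * Δ| ≤ ((ν:ℝ) - 1) * (|zu - zk| * |Δ|) := by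
    rw [abs_mul, abs_mul, mul_assoc]
    exact mul_le_mul_of_nonneg_right hB (by positivity)
  have h2 : |A * P * (ds / Dm)| ≤ ((ν:ℝ) - 1) * (((κ:ℝ) - 1) * (ds / Dm)) := by
    rw [abs_mul, abs_mul, abs_of_nonneg hds', mul_assoc]
    exact mul_le_mul hA (mul_le_mul_of_nonneg_right hP hds') (by positivity) hν1
  have h4 : |B * Q * (ds / Dm)| ≤ ((ν:ℝ) - 1) * (((κ:ℝ) - 1) * (ds / Dm)) := by
    rw [abs_mul, abs_mul, abs_of_nonneg hds', mul_assoc]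
    exact mul_le_mul hB (mul_le_mul_of_nonneg_right hQ hds') (by positivity) hν1
  have : |T| ≤ ((ν:ℝ) - 1) * (|xu - xk| * |Δ|) + ((ν:ℝ) - 1) * (((κ:ℝ) - 1) * (ds / Dm))
      + ((ν:ℝ) - 1) * (|zu - zk| * |Δ|) + ((ν:ℝ) - 1) * (((κ:ℝ) - 1) * (ds / Dm)) := by
    linarith [htri]
  calc |T| ≤ _ := this
    _ = ((ν : ℝ) - 1) * ((|xu - xk| + |zu - zk|) * |Δ| + 2 * ((κ : ℝ) - 1) * ds / Dm) := by
        ring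
end

section
/- Let ν ≥ 1, κ ≥ 1 be integers, and let j₁, i₁, j₂, i₂, m_x, k_x, m_z, k_z be integers with |j₁ − i₁| ≤ ν − 1, |j₂ − i₂| ≤ ν − 1, |m_x − k_x| ≤ κ − 1 and |m_z − k_z| ≤ κ − 1. Let d_s > 0, S_t > 0, D_k > 0, D_m > 0 and real numbers x_u, z_u, x_k, z_k, and set x_m = x_k + (m_x − k_x)·d_s and z_m = z_k + (m_z − k_z)·d_s. Define β_k = π·[(j₁ − i₁)·(x_u − x_k)/D_k + (j₂ − i₂)·(z_u − z_k)/D_k] and β_m = π·[(j₁ − i₁)·(x_u − x_m)/D_m + (j₂ − i₂)·(z_u − z_m)/D_m]. Assume additionally that (x_u − x_k)² + (z_u − z_k)² ≤ D_k², that |D_k − D_m| ≤ S_t, that √2·(κ − 1)·d_s ≤ S_t, and that D_m ≥ 2√2·(ν − 1)·S_t. Then |β_k − β_m| ≤ π. -/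
lemma cs_aux (A B X Z : ℝ) : (A * X + B * Z) ^ 2 ≤ (A ^ 2 + B ^ 2) * (X ^ 2 + Z ^ 2) := by
  nlinarith [sq_nonneg (A * Z - B * X)]

/-- under the aperture and distance conditions, the phase difference
between two subarrays satisfies `|β_k - β_m| ≤ π`. -/
theorem phase_difference_le_pi (ν κ : ℕ) (hν : 1 ≤ ν) (hκ : 1 ≤ κ)
    (j₁ i₁ j₂ i₂ mx kx mz kz : ℤ)
    (hj₁ : |j₁ - i₁| ≤ (ν : ℤ) - 1) (hj₂ : |j₂ - i₂| ≤ (ν : ℤ) - 1)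
    (hmx : |mx - kx| ≤ (κ : ℤ) - 1) (hmz : |mz - kz| ≤ (κ : ℤ) - 1)
    (ds St Dk Dm : ℝ) (hds : 0 < ds) (hSt : 0 < St) (hDk : 0 < Dk) (hDm : 0 < Dm)
    (xu zu xk zk xm zm : ℝ)
    (hxm : xm = xk + ((mx : ℝ) - (kx : ℝ)) * ds)
    (hzm : zm = zk + ((mz : ℝ) - (kz : ℝ)) * ds)
    (βk βm : ℝ)
    (hβk : βk = Real.pi * (((j₁ : ℝ) - (i₁ : ℝ)) * (xu - xk) / Dk
      + ((j₂ : ℝ) - (i₂ : ℝ)) * (zu - zk) / Dk))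
    (hβm : βm = Real.pi * (((j₁ : ℝ) - (i₁ : ℝ)) * (xu - xm) / Dm
      + ((j₂ : ℝ) - (i₂ : ℝ)) * (zu - zm) / Dm))
    (hin : (xu - xk) ^ 2 + (zu - zk) ^ 2 ≤ Dk ^ 2)
    (hDdiff : |Dk - Dm| ≤ St)
    (hdsSt : Real.sqrt 2 * ((κ : ℝ) - 1) * ds ≤ St)
    (hfar : 2 * Real.sqrt 2 * ((ν : ℝ) - 1) * St ≤ Dm) :
    |βk - βm| ≤ Real.pi := by
  have hπ := Real.pi_pos
  have hs2 : Real.sqrt 2 ^ 2 = 2 := Real.sq_sqrt (by norm_num)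
  have hs0 : (0:ℝ) < Real.sqrt 2 := Real.sqrt_pos.mpr (by norm_num)
  have hν' : (0:ℝ) ≤ (ν:ℝ) - 1 := by
    have : (1:ℝ) ≤ ν := by exact_mod_cast hν
    linarith
  have hκ' : (0:ℝ) ≤ (κ:ℝ) - 1 := by
    have : (1:ℝ) ≤ κ := by exact_mod_cast hκ
    linarith
  have hA : |(j₁:ℝ) - i₁| ≤ (ν:ℝ) - 1 := by exact_mod_cast hj₁
  have hB : |(j₂:ℝ) - i₂| ≤ (ν:ℝ) - 1 := by exact_mod_cast hj₂
  have hPx : |(mx:ℝ) - kx| ≤ (κ:ℝ) - 1 := by exact_mod_cast hmx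
  have hPz : |(mz:ℝ) - kz| ≤ (κ:ℝ) - 1 := by exact_mod_cast hmz
  set s : ℝ := Real.sqrt 2 with hsdef
  set A : ℝ := (j₁:ℝ) - i₁ with hAdef
  set B : ℝ := (j₂:ℝ) - i₂ with hBdef
  set X : ℝ := xu - xk with hXdef
  set Z : ℝ := zu - zk with hZdef
  set P : ℝ := ((mx:ℝ) - kx) * ds with hPdef
  set Q : ℝ := ((mz:ℝ) - kz) * ds with hQdef
  clear_value s A B X Z P Q
  have hss : s * s = 2 := by rw [← hs2]; ring
  have hA2 : A ^ 2 ≤ ((ν:ℝ) - 1) ^ 2 := by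
    rw [← sq_abs]; exact pow_le_pow_left₀ (abs_nonneg _) hA 2
  have hB2 : B ^ 2 ≤ ((ν:ℝ) - 1) ^ 2 := by
    rw [← sq_abs]; exact pow_le_pow_left₀ (abs_nonneg _) hB 2
  -- Cauchy–Schwarz bound
  have h3 : (A ^ 2 + B ^ 2) * (X ^ 2 + Z ^ 2) ≤ 2 * ((ν:ℝ) - 1) ^ 2 * Dk ^ 2 := by
    have step1 : (A ^ 2 + B ^ 2) * (X ^ 2 + Z ^ 2)
        ≤ (2 * ((ν:ℝ) - 1) ^ 2) * (X ^ 2 + Z ^ 2) :=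
      mul_le_mul_of_nonneg_right (by linarith) (by positivity)
    have step2 : (2 * ((ν:ℝ) - 1) ^ 2) * (X ^ 2 + Z ^ 2)
        ≤ (2 * ((ν:ℝ) - 1) ^ 2) * Dk ^ 2 :=
      mul_le_mul_of_nonneg_left hin (by positivity)
    calc (A ^ 2 + B ^ 2) * (X ^ 2 + Z ^ 2)
        ≤ (2 * ((ν:ℝ) - 1) ^ 2) * (X ^ 2 + Z ^ 2) := step1
      _ ≤ 2 * ((ν:ℝ) - 1) ^ 2 * Dk ^ 2 := step2
  have hCS : (A * X + B * Z) ^ 2 ≤ (s * ((ν:ℝ) - 1) * Dk) ^ 2 := by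
    have hexp : (s * ((ν:ℝ) - 1) * Dk) ^ 2 = 2 * ((ν:ℝ) - 1) ^ 2 * Dk ^ 2 := by
      rw [mul_pow, mul_pow, hs2]
    rw [hexp]
    linarith [cs_aux A B X Z, h3]
  have h1abs : |A * X + B * Z| ≤ s * ((ν:ℝ) - 1) * Dk :=
    abs_le_of_sq_le_sq hCS (by positivity)
  have hDmk : |Dm - Dk| ≤ St := by rw [abs_sub_comm]; exact hDdiff
  have hDkm : (0:ℝ) < Dk * Dm := mul_pos hDk hDm
  -- first term bound
  have hu : |(A * X + B * Z) * (Dm - Dk) / (Dk * Dm)| ≤ 1 / 2 := by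
    rw [abs_div, abs_mul, abs_of_pos hDkm, div_le_iff₀ hDkm]
    have hmm : |A * X + B * Z| * |Dm - Dk| ≤ (s * ((ν:ℝ) - 1) * Dk) * St :=
      mul_le_mul h1abs hDmk (abs_nonneg _) (by positivity)
    have hfar' : Dk * (2 * s * ((ν:ℝ) - 1) * St) ≤ Dk * Dm :=
      mul_le_mul_of_nonneg_left hfar hDk.le
    linarith [hmm, hfar']
  -- second term bound
  have hAP : |A * P| ≤ ((ν:ℝ) - 1) * (((κ:ℝ) - 1) * ds) := by
    rw [abs_mul, hPdef, abs_mul, abs_of_pos hds]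
    exact mul_le_mul hA (mul_le_mul_of_nonneg_right hPx hds.le) (by positivity) hν'
  have hBQ : |B * Q| ≤ ((ν:ℝ) - 1) * (((κ:ℝ) - 1) * ds) := by
    rw [abs_mul, hQdef, abs_mul, abs_of_pos hds]
    exact mul_le_mul hB (mul_le_mul_of_nonneg_right hPz hds.le) (by positivity) hν'
  have hDm4 : 4 * (((ν:ℝ) - 1) * (((κ:ℝ) - 1) * ds)) ≤ Dm := by
    have hprod : (2 * s * ((ν:ℝ) - 1)) * (s * ((κ:ℝ) - 1) * ds)
        ≤ (2 * s * ((ν:ℝ) - 1)) * St :=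
      mul_le_mul_of_nonneg_left hdsSt (by positivity)
    have e2 : (2 * s * ((ν:ℝ) - 1)) * (s * ((κ:ℝ) - 1) * ds)
        = (s * s) * (2 * (((ν:ℝ) - 1) * (((κ:ℝ) - 1) * ds))) := by ring
    rw [hss] at e2
    linarith [hprod, hfar, e2.symm.le, e2.le]
  have hv : |(A * P + B * Q) / Dm| ≤ 1 / 2 := by
    rw [abs_div, abs_of_pos hDm, div_le_iff₀ hDm]
    linarith [abs_add_le (A * P) (B * Q), hAP, hBQ, hDm4]
  -- algebraic identity
  have key : βk - βm = Real.pi * ((A * X + B * Z) * (Dm - Dk) / (Dk * Dm)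
      + (A * P + B * Q) / Dm) := by
    rw [hβk, hβm, hxm, hzm, hXdef, hZdef]
    field_simp
    ring
  rw [key, abs_mul, abs_of_pos hπ]
  have h1 : |(A * X + B * Z) * (Dm - Dk) / (Dk * Dm) + (A * P + B * Q) / Dm| ≤ 1 := by
    have := abs_add_le ((A * X + B * Z) * (Dm - Dk) / (Dk * Dm)) ((A * P + B * Q) / Dm)
    linarith [hu, hv]
  calc Real.pi * |(A * X + B * Z) * (Dm - Dk) / (Dk * Dm) + (A * P + B * Q) / Dm|
      ≤ Real.pi * 1 := mul_le_mul_of_nonneg_left h1 hπ.le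
    _ = Real.pi := mul_one _
end

section
/- Let n₁, n₂, p₁, p₂ ≥ 1 be integers and σ > 0. Let A ∈ ℂ^{(n₁+n₂)×(n₁+n₂)} have block decomposition A = [[A₁₁, A₁₂],[A₂₁, A₂₂]] with A₁₁ ∈ ℂ^{n₁×n₁}, A₁₂ ∈ ℂ^{n₁×n₂}, A₂₁ ∈ ℂ^{n₂×n₁}, A₂₂ ∈ ℂ^{n₂×n₂}, and let F₁ ∈ ℂ^{n₁×p₁}, F₂ ∈ ℂ^{n₂×p₂}. Let F ∈ ℂ^{(n₁+n₂)×(p₁+p₂)} be the block-diagonal matrix with diagonal blocks F₁ and F₂. Define B = I_{p₂} + σ^{−2}·F₂ᴴ A₂₂ F₂ and assume B is invertible, and define X = A₁₁ − σ^{−2}·A₁₂ F₂ B^{−1} F₂ᴴ A₂₁. Then det(I_{p₁+p₂} + σ^{−2}·Fᴴ A F) = det(B) · det(I_{p₁} + σ^{−2}·F₁ᴴ X F₁). -/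
open Matrix

/-- Schur-complement determinant decomposition of
`det(I + σ⁻² Fᴴ A F)` for a two-block block-diagonal `F`. -/
theorem schur_det_decomposition (n₁ n₂ p₁ p₂ : ℕ)
    (hn₁ : 1 ≤ n₁) (hn₂ : 1 ≤ n₂) (hp₁ : 1 ≤ p₁) (hp₂ : 1 ≤ p₂)
    (σ : ℝ) (hσ : 0 < σ)
    (A₁₁ : Matrix (Fin n₁) (Fin n₁) ℂ) (A₁₂ : Matrix (Fin n₁) (Fin n₂) ℂ)
    (A₂₁ : Matrix (Fin n₂) (Fin n₁) ℂ) (A₂₂ : Matrix (Fin n₂) (Fin n₂) ℂ)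
    (F₁ : Matrix (Fin n₁) (Fin p₁) ℂ) (F₂ : Matrix (Fin n₂) (Fin p₂) ℂ)
    (B : Matrix (Fin p₂) (Fin p₂) ℂ)
    (hB : B = 1 + (((σ ^ 2)⁻¹ : ℝ) : ℂ) • (F₂ᴴ * A₂₂ * F₂))
    (hBunit : IsUnit B)
    (X : Matrix (Fin n₁) (Fin n₁) ℂ)
    (hX : X = A₁₁ - (((σ ^ 2)⁻¹ : ℝ) : ℂ) • (A₁₂ * F₂ * B⁻¹ * F₂ᴴ * A₂₁)) :
    ((1 : Matrix (Fin p₁ ⊕ Fin p₂) (Fin p₁ ⊕ Fin p₂) ℂ) +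
        (((σ ^ 2)⁻¹ : ℝ) : ℂ) • ((Matrix.fromBlocks F₁ 0 0 F₂)ᴴ *
          Matrix.fromBlocks A₁₁ A₁₂ A₂₁ A₂₂ * Matrix.fromBlocks F₁ 0 0 F₂)).det =
      B.det * ((1 : Matrix (Fin p₁) (Fin p₁) ℂ) +
        (((σ ^ 2)⁻¹ : ℝ) : ℂ) • (F₁ᴴ * X * F₁)).det := by
  set s : ℂ := (((σ ^ 2)⁻¹ : ℝ) : ℂ)
  haveI : Invertible B := hBunit.invertible
  have hInv : ⅟ B = B⁻¹ := (invOf_eq_nonsing_inv B)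
  have hbig : (1 : Matrix (Fin p₁ ⊕ Fin p₂) (Fin p₁ ⊕ Fin p₂) ℂ) +
      s • ((Matrix.fromBlocks F₁ 0 0 F₂)ᴴ *
        Matrix.fromBlocks A₁₁ A₁₂ A₂₁ A₂₂ * Matrix.fromBlocks F₁ 0 0 F₂) =
      Matrix.fromBlocks (1 + s • (F₁ᴴ * A₁₁ * F₁)) (s • (F₁ᴴ * A₁₂ * F₂))
        (s • (F₂ᴴ * A₂₁ * F₁)) B := by
    rw [hB, fromBlocks_conjTranspose, Matrix.fromBlocks_multiply,
      Matrix.fromBlocks_multiply, Matrix.fromBlocks_smul, ← Matrix.fromBlocks_one,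
      Matrix.fromBlocks_add]
    congr 1 <;> simp [Matrix.mul_assoc]
  rw [hbig, det_fromBlocks₂₂, hInv, hX]
  congr 2
  simp only [Matrix.mul_sub, Matrix.sub_mul, Matrix.mul_smul, Matrix.smul_mul,
    smul_smul, smul_sub, Matrix.mul_assoc]
  abel
end

section
/- Let X ∈ ℂ^{n×n} be a Hermitian positive semi-definite matrix with eigenvalues λ₁ ≥ λ₂ ≥ ⋯ ≥ λ_n ≥ 0, let c > 0, and let 1 ≤ ℓ ≤ n. Then for every F ∈ ℂ^{n×ℓ} with orthonormal columns (FᴴF = I_ℓ), det(I_ℓ + c·Fᴴ X F) ≤ ∏_{i=1}^{ℓ} (1 + c·λ_i); moreover, if the columns of F are orthonormal eigenvectors of X associated with the ℓ largest eigenvalues λ₁, …, λ_ℓ, then det(I_ℓ + c·Fᴴ X F) = ∏_{i=1}^{ℓ} (1 + c·λ_i). -/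
/-!
Let `U` be the unitary matrix whose columns are the eigenvectors `v i`, and `W = Uᴴ F`. Then
`WᴴW = FᴴF = 1` and `1 + c FᴴXF = Wᴴ D W` with `D = diag (1 + c λₖ)`. By Cauchy–Binet,
`det (Wᴴ D W) = ∑_S (∏_{k ∈ S} (1 + c λₖ)) |det W_S|²`, the sum running over the `ℓ`-element sets
`S` of rows of `W`, and the weights `|det W_S|²` add up to `det (WᴴW) = 1`. So the determinant is a
convex combination of the products `∏_{k ∈ S} (1 + c λₖ)`, each of which is at most the product
over the `ℓ` largest eigenvalues because `λ` is antitone. When the columns of `F` are the leading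
eigenvectors, `FᴴXF` is the diagonal matrix of the leading eigenvalues.
-/

open Matrix Set.powersetCard exteriorPower
open scoped ComplexOrder

theorem Fin.val_le_of_strictMono {ℓ n : ℕ} {e : Fin ℓ → Fin n} (he : StrictMono e) (i : Fin ℓ) :
    (i : ℕ) ≤ e i := by
  simpa using Finset.card_le_card_of_injOn e (s := Finset.Iio i) (t := Finset.Iio (e i))
    (fun j hj => by simpa using he (by simpa using hj)) he.injective.injOn

theorem Antitone.prod_comp_le_prod_comp_castLE {R : Type*} [CommMonoidWithZero R] [Preorder R]
    [ZeroLEOneClass R] [PosMulMono R] {ℓ n : ℕ} (hℓn : ℓ ≤ n) {g : Fin n → R} (hg : Antitone g)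
    (hg0 : ∀ k, 0 ≤ g k) {e : Fin ℓ → Fin n} (he : StrictMono e) :
    ∏ i, g (e i) ≤ ∏ i, g (Fin.castLE hℓn i) :=
  Finset.prod_le_prod (fun _ _ => hg0 _) fun i _ =>
    hg (Fin.le_def.mpr (Fin.val_le_of_strictMono he i))

namespace Matrix

theorem det_mul_eq_sum_det_submatrix {R ι : Type*} [CommRing R] [Fintype ι] [LinearOrder ι]
    {m : ℕ} (A : Matrix (Fin m) ι R) (B : Matrix ι (Fin m) R) :
    (A * B).det = ∑ s : Set.powersetCard ι m,
      (A.submatrix id (ofFinEmbEquiv.symm s)).det * (B.submatrix (ofFinEmbEquiv.symm s) id).det := by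
  let b := Pi.basisFun R ι
  let rowA : Fin m → Module.Dual R (ι → R) := fun i => ∑ k, A i k • b.coord k
  have hrowA : ∀ i x, rowA i x = ∑ k, A i k * x k := by simp [rowA, b]
  -- `det (A * B)` pairs the wedge of the rows of `A` with the wedge of the columns of `B`; expand
  -- the latter in the basis of `⋀^m (ι → R)` induced by the standard basis.
  have hpair : (A * B).det =
      pairingDual R (ι → R) m (ιMulti R m rowA) (ιMulti R m fun j k => B k j) := by
    rw [pairingDual_ιMulti_ιMulti, ← det_transpose]
    congr 1
    ext i j
    simp [hrowA, mul_apply]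
  rw [hpair, ← (b.exteriorPower m).sum_repr (ιMulti R m fun j k => B k j), map_sum]
  refine Finset.sum_congr rfl fun s _ => ?_
  rw [map_smul, smul_eq_mul, mul_comm, basis_repr_apply, ιMultiDual_apply_ιMulti, basis_apply,
    ιMulti_family, pairingDual_ιMulti_ιMulti, ← det_transpose (A.submatrix _ _),
    ← det_transpose (B.submatrix _ _)]
  congr 2
  ext i j
  simp [hrowA, b, Pi.single_apply]

section RCLike

variable {𝕜 : Type*} [RCLike 𝕜]

theorem det_conjTranspose_mul_diagonal_mul {ι : Type*} [Fintype ι] [LinearOrder ι] {m : ℕ}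
    (W : Matrix ι (Fin m) 𝕜) (d : ι → ℝ) :
    (Wᴴ * diagonal (fun k => (d k : 𝕜)) * W).det =
      ((∑ s : Set.powersetCard ι m, (∏ i, d (ofFinEmbEquiv.symm s i)) *
        ‖(W.submatrix (ofFinEmbEquiv.symm s) id).det‖ ^ 2 : ℝ) : 𝕜) := by
  rw [det_mul_eq_sum_det_submatrix]
  push_cast
  refine Finset.sum_congr rfl fun s _ => ?_
  have hrows : (Wᴴ * diagonal (fun k => (d k : 𝕜))).submatrix id (ofFinEmbEquiv.symm s) =
      (W.submatrix (ofFinEmbEquiv.symm s) id)ᴴ *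
        diagonal (fun i => (d (ofFinEmbEquiv.symm s i) : 𝕜)) := by
    ext i j
    simp [mul_apply, diagonal]
  rw [hrows, det_mul, det_conjTranspose, det_diagonal, ← RCLike.conj_mul]
  simp only [RCLike.star_def]
  ring

theorem sum_norm_sq_det_submatrix_eq_one {ι : Type*} [Fintype ι] [LinearOrder ι] {m : ℕ}
    {W : Matrix ι (Fin m) 𝕜} (hW : Wᴴ * W = 1) :
    ∑ s : Set.powersetCard ι m, ‖(W.submatrix (ofFinEmbEquiv.symm s) id).det‖ ^ 2 = 1 := by
  have h := det_conjTranspose_mul_diagonal_mul W 1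
  simp only [Pi.one_apply, RCLike.ofReal_one, diagonal_one, Matrix.mul_one, hW, det_one,
    Finset.prod_const_one, one_mul] at h
  exact_mod_cast h.symm

theorem re_det_conjTranspose_mul_diagonal_mul_le {ℓ n : ℕ} (hℓn : ℓ ≤ n)
    {W : Matrix (Fin n) (Fin ℓ) 𝕜} (hW : Wᴴ * W = 1) {d : Fin n → ℝ} (hd : Antitone d)
    (hd0 : ∀ k, 0 ≤ d k) :
    RCLike.re (Wᴴ * diagonal (fun k => (d k : 𝕜)) * W).det ≤ ∏ i, d (Fin.castLE hℓn i) := by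
  rw [det_conjTranspose_mul_diagonal_mul, RCLike.ofReal_re]
  calc ∑ s : Set.powersetCard (Fin n) ℓ, (∏ i, d (ofFinEmbEquiv.symm s i)) *
          ‖(W.submatrix (ofFinEmbEquiv.symm s) id).det‖ ^ 2
      ≤ ∑ s : Set.powersetCard (Fin n) ℓ, (∏ i, d (Fin.castLE hℓn i)) *
          ‖(W.submatrix (ofFinEmbEquiv.symm s) id).det‖ ^ 2 :=
        Finset.sum_le_sum fun s _ => mul_le_mul_of_nonneg_right
          (hd.prod_comp_le_prod_comp_castLE hℓn hd0 (ofFinEmbEquiv.symm s).strictMono)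
          (sq_nonneg _)
    _ = ∏ i, d (Fin.castLE hℓn i) := by
        rw [← Finset.mul_sum, sum_norm_sq_det_submatrix_eq_one hW, mul_one]

end RCLike

section Eigenbasis

variable {R ι : Type*} [Fintype ι] [DecidableEq ι]

theorem conjTranspose_transpose_of_mul_transpose_of_eq_one [CommSemiring R] [StarRing R]
    {v : ι → ι → R} (hv : ∀ i j, star (v i) ⬝ᵥ v j = if i = j then 1 else 0) :
    (of v)ᵀᴴ * (of v)ᵀ = 1 := by
  ext i j
  simpa [mul_apply, one_apply, dotProduct] using hv i j

theorem mul_transpose_of_eq_transpose_of_mul_diagonal [CommSemiring R] {X : Matrix ι ι R}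
    {v : ι → ι → R} {μ : ι → R} (hv : ∀ i, X *ᵥ v i = μ i • v i) :
    X * (of v)ᵀ = (of v)ᵀ * diagonal μ := by
  ext j i
  rw [mul_diagonal, mul_apply]
  simpa [mulVec, dotProduct, mul_comm] using congrFun (hv i) j

variable [CommRing R] [StarRing R] {X U : Matrix ι ι R} {μ : ι → R}

theorem conjTranspose_mul_mul_eq_of_mul_eq_mul_diagonal (hU : Uᴴ * U = 1)
    (hXU : X * U = U * diagonal μ) {κ : Type*} (F : Matrix ι κ R) :
    Fᴴ * X * F = (Uᴴ * F)ᴴ * diagonal μ * (Uᴴ * F) := by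
  have hX : X = U * diagonal μ * Uᴴ := by
    rw [← hXU, Matrix.mul_assoc, mul_eq_one_comm.mp hU, Matrix.mul_one]
  simp only [hX, conjTranspose_mul, conjTranspose_conjTranspose, Matrix.mul_assoc]

theorem conjTranspose_submatrix_mul_mul_submatrix_eq_diagonal (hU : Uᴴ * U = 1)
    (hXU : X * U = U * diagonal μ) {κ : Type*} [DecidableEq κ] {e : κ → ι}
    (he : Function.Injective e) :
    (U.submatrix id e)ᴴ * X * U.submatrix id e = diagonal (μ ∘ e) := by
  rw [conjTranspose_submatrix, ← submatrix_id_id X,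
    ← submatrix_mul _ _ _ _ _ Function.bijective_id,
    ← submatrix_mul _ _ _ _ _ Function.bijective_id, Matrix.mul_assoc, hXU, ← Matrix.mul_assoc,
    hU, Matrix.one_mul, submatrix_diagonal _ _ he]

end Eigenbasis

theorem one_add_smul_diagonal {ι : Type*} [DecidableEq ι] (c : ℝ) (μ : ι → ℝ) :
    (1 : Matrix ι ι ℂ) + c • diagonal (fun k => (μ k : ℂ)) =
      diagonal (fun k => ((1 + c * μ k : ℝ) : ℂ)) := by
  rw [← diagonal_one, ← diagonal_smul, diagonal_add]
  congr 1
  ext k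
  simp

end Matrix

theorem leading_eigenvectors_maximize_logdet_general (n ℓ : ℕ)
    (hℓn : ℓ ≤ n) (c : ℝ) (hc : 0 < c)
    (X : Matrix (Fin n) (Fin n) ℂ)
    (lam : Fin n → ℝ) (hanti : Antitone lam) (hnonneg : ∀ i, 0 ≤ lam i)
    (v : Fin n → Fin n → ℂ)
    (hortho : ∀ i j, dotProduct (star (v i)) (v j) = if i = j then 1 else 0)
    (heig : ∀ i, X.mulVec (v i) = (lam i : ℂ) • v i) :
    (∀ F : Matrix (Fin n) (Fin ℓ) ℂ, Fᴴ * F = 1 →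
      (((1 : Matrix (Fin ℓ) (Fin ℓ) ℂ) + c • (Fᴴ * X * F)).det).re ≤
        ∏ i : Fin ℓ, (1 + c * lam (Fin.castLE hℓn i))) ∧
    (∀ F : Matrix (Fin n) (Fin ℓ) ℂ, (∀ j i, F j i = v (Fin.castLE hℓn i) j) →
      ((1 : Matrix (Fin ℓ) (Fin ℓ) ℂ) + c • (Fᴴ * X * F)).det =
        ((∏ i : Fin ℓ, (1 + c * lam (Fin.castLE hℓn i)) : ℝ) : ℂ)) := by
  have hU := conjTranspose_transpose_of_mul_transpose_of_eq_one hortho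
  have hXU := mul_transpose_of_eq_transpose_of_mul_diagonal heig
  refine ⟨fun F hF => ?_, fun F hF => ?_⟩
  · set W := (of v)ᵀᴴ * F
    have hW : Wᴴ * W = 1 := by
      rw [conjTranspose_mul, conjTranspose_conjTranspose, Matrix.mul_assoc,
        ← Matrix.mul_assoc (of v)ᵀ, mul_eq_one_comm.mp hU, Matrix.one_mul, hF]
    have hpencil : 1 + c • (Fᴴ * X * F) =
        Wᴴ * diagonal (fun k => ((1 + c * lam k : ℝ) : ℂ)) * W := by
      rw [conjTranspose_mul_mul_eq_of_mul_eq_mul_diagonal hU hXU, ← one_add_smul_diagonal,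
        Matrix.mul_add, Matrix.add_mul, Matrix.mul_one, hW, Matrix.mul_smul, Matrix.smul_mul]
    rw [hpencil, ← RCLike.re_to_complex]
    exact re_det_conjTranspose_mul_diagonal_mul_le hℓn hW ((hanti.const_mul hc.le).const_add 1)
      fun k => add_nonneg zero_le_one (mul_nonneg hc.le (hnonneg k))
  · have hFU : F = (of v)ᵀ.submatrix id (Fin.castLE hℓn) := by ext j i; exact hF j i
    rw [hFU, conjTranspose_submatrix_mul_mul_submatrix_eq_diagonal hU hXU
      (Fin.castLE_injective hℓn), Function.comp_def, one_add_smul_diagonal, det_diagonal]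
    push_cast
    rfl

/-- for a Hermitian PSD matrix `X` with eigenvalues `λ₁ ≥ ⋯ ≥ λₙ ≥ 0`
(given by an orthonormal eigenbasis `v`), every semi-unitary `F` with `ℓ` columns satisfies
`det(I + c FᴴXF) ≤ ∏_{i≤ℓ} (1 + c λᵢ)`, with equality when the columns of `F` are the
leading `ℓ` eigenvectors. -/
theorem leading_eigenvectors_maximize_logdet (n ℓ : ℕ) (hn : 1 ≤ n) (hℓ : 1 ≤ ℓ)
    (hℓn : ℓ ≤ n) (c : ℝ) (hc : 0 < c)
    (X : Matrix (Fin n) (Fin n) ℂ) (hX : X.PosSemidef)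
    (lam : Fin n → ℝ) (hanti : Antitone lam) (hnonneg : ∀ i, 0 ≤ lam i)
    (v : Fin n → Fin n → ℂ)
    (hortho : ∀ i j, dotProduct (star (v i)) (v j) = if i = j then 1 else 0)
    (heig : ∀ i, X.mulVec (v i) = (lam i : ℂ) • v i) :
    (∀ F : Matrix (Fin n) (Fin ℓ) ℂ, Fᴴ * F = 1 →
      (((1 : Matrix (Fin ℓ) (Fin ℓ) ℂ) + c • (Fᴴ * X * F)).det).re ≤
        ∏ i : Fin ℓ, (1 + c * lam (Fin.castLE hℓn i))) ∧
    (∀ F : Matrix (Fin n) (Fin ℓ) ℂ, (∀ j i, F j i = v (Fin.castLE hℓn i) j) →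
      ((1 : Matrix (Fin ℓ) (Fin ℓ) ℂ) + c • (Fᴴ * X * F)).det =
        ((∏ i : Fin ℓ, (1 + c * lam (Fin.castLE hℓn i)) : ℝ) : ℂ)) :=
  leading_eigenvectors_maximize_logdet_general n ℓ hℓn c hc X lam hanti hnonneg v hortho heig
end
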